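/- There exists a solvable MPP instance (G, R, x_I, x_G) such that no solution simultaneously attains the minimum total distance and the minimum makespan. -/

import Mathlib

/-!
Formalization of multi-robot path planning on graphs (MPP).

An MPP instance consists of a connected simple graph `G` on a vertex type `V`,
a finite set of robots (an index type `R`), and injective start/goal
configurations `xI xG : R → V`.  A scheduled path is a map `ℕ → V`.
-/

namespace MPPFormal

variable {V R : Type}

/-- The arrival time of a path `p` with goal `g`: the smallest time `t`
with `p t = g`. -/
noncomputable def arrivalTime (g : V) (p : ℕ → V) : ℕ := sInf {t | p t = g}

/-- A feasible scheduled path from `s` to `g` in the graph `G`: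
it starts at `s`, reaches `g` at some time, stays at `g` forever after the
first time it reaches `g`, and at every time step it either traverses an
edge of `G` or stays put. -/
def FeasiblePath (G : SimpleGraph V) (s g : V) (p : ℕ → V) : Prop :=
  p 0 = s ∧ (∃ t, p t = g) ∧ (∀ t, arrivalTime g p ≤ t → p t = g) ∧
    ∀ t, G.Adj (p t) (p (t + 1)) ∨ p t = p (t + 1)

/-- Two scheduled paths collide if they meet at the same vertex at the same
time, or if they swap along an edge head-on. -/
def Collide (p q : ℕ → V) : Prop :=
  (∃ t, p t = q t) ∨ ∃ t, p t = q (t + 1) ∧ p (t + 1) = q t ∧ p t ≠ p (t + 1)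

/-- The length of a scheduled path: the number of time steps at which it
actually moves. -/
noncomputable def pathLen (p : ℕ → V) : ℕ := Set.ncard {t | p t ≠ p (t + 1)}

/-- A solution to the MPP instance `(G, R, xI, xG)`: a family of pairwise
non-colliding feasible paths, one per robot. -/
def IsSolution (G : SimpleGraph V) (xI xG : R → V) (p : R → ℕ → V) : Prop :=
  (∀ i, FeasiblePath G (xI i) (xG i) (p i)) ∧
    Pairwise fun i j => ¬ Collide (p i) (p j)

/-- `(G, xI, xG)` together with the robot index type `R` forms an MPP
instance: the graph is connected and the start and goal configurations are
injective. -/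
def IsMPPInstance (G : SimpleGraph V) (xI xG : R → V) : Prop :=
  G.Connected ∧ Function.Injective xI ∧ Function.Injective xG

variable [Fintype R]

/-- Total arrival time of a solution. -/
noncomputable def totalTime (xG : R → V) (p : R → ℕ → V) : ℕ :=
  ∑ i, arrivalTime (xG i) (p i)

/-- Makespan (last arrival time) of a solution. -/
noncomputable def makespan (xG : R → V) (p : R → ℕ → V) : ℕ :=
  Finset.univ.sup fun i => arrivalTime (xG i) (p i)

/-- Total distance traveled in a solution. -/
noncomputable def totalDist (p : R → ℕ → V) : ℕ := ∑ i, pathLen (p i)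

/-- Maximum single-robot distance of a solution. -/
noncomputable def maxDist (p : R → ℕ → V) : ℕ :=
  Finset.univ.sup fun i => pathLen (p i)

/-- Minimum total arrival time over all solutions. -/
noncomputable def minTotalTime (G : SimpleGraph V) (xI xG : R → V) : ℕ :=
  sInf {c | ∃ p, IsSolution G xI xG p ∧ totalTime xG p = c}

/-- Minimum makespan over all solutions. -/
noncomputable def minMakespan (G : SimpleGraph V) (xI xG : R → V) : ℕ :=
  sInf {c | ∃ p, IsSolution G xI xG p ∧ makespan xG p = c}

/-- Minimum total distance over all solutions. -/
noncomputable def minTotalDist (G : SimpleGraph V) (xI xG : R → V) : ℕ :=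
  sInf {c | ∃ p, IsSolution G xI xG p ∧ totalDist p = c}

/-- Minimum maximum distance over all solutions. -/
noncomputable def minMaxDist (G : SimpleGraph V) (xI xG : R → V) : ℕ :=
  sInf {c | ∃ p, IsSolution G xI xG p ∧ maxDist p = c}

end MPPFormal

/-!
On the path `0 — 1 — ⋯ — 8` with the chord `1 — 7`, robot `0` goes from `0` to `8` and robot `1`
from `6` to `2`; their unique shortest routes `0, 1, 7, 8` and `6, 7, 1, 2` cross the chord in
opposite directions. Each robot needs at least three moves. If robot `1` waits two steps for
robot `0` to clear the chord, the total distance is `6` and the makespan `5`; if it takes the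
detour `6, 5, 4, 3, 2` instead, the makespan is `4`. A solution of total distance `6` moves both
robots along their shortest routes, and with makespan `4` each of them may wait at most once.
Graph potentials (distances from the start and to the goal) then confine both robots to the
chord at times `1`, `2`, `3`, where they must meet or swap.
-/

namespace MPPFormal

open SimpleGraph

section General

variable {V : Type} {G : SimpleGraph V} {s g : V} {p q : ℕ → V}

theorem Collide.symm (h : Collide p q) : Collide q p := by
  rcases h with ⟨t, ht⟩ | ⟨t, h1, h2, h3⟩
  · exact Or.inl ⟨t, ht.symm⟩
  · exact Or.inr ⟨t, h2.symm, h1.symm, fun h => h3 (by rw [h1, h2, h])⟩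

theorem not_collide_of_forall_ge {T : ℕ} (hp : ∀ t, T ≤ t → p t = p T)
    (hq : ∀ t, T ≤ t → q t = q T) (hmeet : ∀ t ≤ T, p t ≠ q t)
    (hswap : ∀ t < T, ¬(p t = q (t + 1) ∧ p (t + 1) = q t)) : ¬Collide p q := by
  rintro (⟨t, ht⟩ | ⟨t, h1, h2, -⟩)
  · rcases le_total t T with htT | hTt
    · exact hmeet t htT ht
    · exact hmeet T le_rfl (by rw [← hp t hTt, ← hq t hTt, ht])
  · rcases lt_or_ge t T with htT | hTt
    · exact hswap t htT ⟨h1, h2⟩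
    · exact hmeet T le_rfl (by rw [← hp t hTt, ← hq (t + 1) (by omega), h1])

theorem arrivalTime_le {t : ℕ} (h : p t = g) : arrivalTime g p ≤ t := Nat.sInf_le h

theorem arrivalTime_eq {T : ℕ} (hT : p T = g) (hlt : ∀ t < T, p t ≠ g) :
    arrivalTime g p = T :=
  le_antisymm (arrivalTime_le hT) <| not_lt.mp fun h =>
    hlt _ h (Nat.sInf_mem (s := {t | p t = g}) ⟨T, hT⟩)

theorem FeasiblePath.apply_of_arrivalTime_le (hf : FeasiblePath G s g p) {t : ℕ}
    (ht : arrivalTime g p ≤ t) : p t = g :=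
  hf.2.2.1 t ht

theorem FeasiblePath.step (hf : FeasiblePath G s g p) (t : ℕ) :
    G.Adj (p t) (p (t + 1)) ∨ p t = p (t + 1) :=
  hf.2.2.2 t

def listPath (l : List V) (g : V) (t : ℕ) : V := l.getD t g

theorem listPath_of_length_le {l : List V} {t : ℕ} (ht : l.length ≤ t) : listPath l g t = g :=
  List.getD_eq_default l g ht

theorem listPath_eq_of_length_le {l : List V} {t T : ℕ} (hT : l.length ≤ T) (ht : T ≤ t) :
    listPath l g t = listPath l g T :=
  (listPath_of_length_le (hT.trans ht)).trans (listPath_of_length_le hT).symm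

theorem arrivalTime_listPath {l : List V} (hg : g ∉ l) : arrivalTime g (listPath l g) = l.length :=
  arrivalTime_eq (listPath_of_length_le le_rfl) fun t ht h => hg <| by
    rw [listPath, List.getD_eq_getElem _ _ ht] at h
    exact h ▸ List.getElem_mem ht

theorem feasiblePath_listPath {l : List V} (h0 : listPath l g 0 = s) (hg : g ∉ l)
    (hstep : ∀ t < l.length,
      G.Adj (listPath l g t) (listPath l g (t + 1)) ∨ listPath l g t = listPath l g (t + 1)) :
    FeasiblePath G s g (listPath l g) := by
  refine ⟨h0, ⟨_, listPath_of_length_le le_rfl⟩, fun t ht => ?_, fun t => ?_⟩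
  · exact listPath_of_length_le (arrivalTime_listPath hg ▸ ht)
  · rcases lt_or_ge t l.length with ht | ht
    · exact hstep t ht
    · exact Or.inr <| by rw [listPath_of_length_le ht, listPath_of_length_le (by omega)]

theorem pairwise_not_collide_fin_two {p : Fin 2 → ℕ → V} (h : ¬Collide (p 0) (p 1)) :
    Pairwise fun i j => ¬Collide (p i) (p j) := by
  intro i j hij
  fin_cases i <;> fin_cases j
  exacts [absurd rfl hij, h, fun hc => h (Collide.symm hc), absurd rfl hij]

def IsOneLipschitz (G : SimpleGraph V) (φ : V → ℤ) : Prop := ∀ u v, G.Adj u v → φ u ≤ φ v + 1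

theorem IsOneLipschitz.neg {φ : V → ℤ} (hφ : IsOneLipschitz G φ) : IsOneLipschitz G (-φ) :=
  fun u v huv => by simpa [add_comm] using hφ v u huv.symm

section Moves

variable [DecidableEq V]

def movesBefore (p : ℕ → V) : ℕ → ℕ
  | 0 => 0
  | t + 1 => movesBefore p t + if p t = p (t + 1) then 0 else 1

theorem movesBefore_le_add {a b : ℕ} (hab : a ≤ b) :
    movesBefore p b ≤ movesBefore p a + (b - a) := by
  induction b, hab using Nat.le_induction with
  | base => simp
  | succ b hab ih =>
    simp only [movesBefore]
    split_ifs <;> omega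

theorem card_filter_range_eq_movesBefore (t : ℕ) :
    ((Finset.range t).filter fun u => p u ≠ p (u + 1)).card = movesBefore p t := by
  induction t with
  | zero => rfl
  | succ t ih =>
    rw [Finset.range_add_one, Finset.filter_insert, movesBefore, ← ih]
    by_cases h : p t = p (t + 1)
    · simp [h]
    · simp only [ne_eq, h, not_false_eq_true, if_true, if_false]
      exact Finset.card_insert_of_notMem (by simp)

theorem FeasiblePath.pathLen_eq_movesBefore (hf : FeasiblePath G s g p) {T : ℕ}
    (hT : arrivalTime g p ≤ T) : pathLen p = movesBefore p T := by
  have hmoves : {t | p t ≠ p (t + 1)} = ↑((Finset.range T).filter fun u => p u ≠ p (u + 1)) := by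
    ext t
    simp only [Finset.coe_filter, Finset.mem_range, Set.mem_ofPred_eq, iff_and_self]
    intro ht
    by_contra hTt
    exact ht <| (hf.apply_of_arrivalTime_le (by omega)).trans
      (hf.apply_of_arrivalTime_le (by omega)).symm
  rw [pathLen, hmoves, Set.ncard_coe_finset, card_filter_range_eq_movesBefore]

theorem monotone_movesBefore_add {φ : V → ℤ} (hφ : IsOneLipschitz G φ)
    (hstep : ∀ t, G.Adj (p t) (p (t + 1)) ∨ p t = p (t + 1)) :
    Monotone fun t => (movesBefore p t : ℤ) + φ (p t) := by
  refine monotone_nat_of_le_succ fun t => ?_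
  simp only [movesBefore]
  split_ifs with h
  · simp [h]
  · have := hφ _ _ ((hstep t).resolve_right h)
    push_cast
    linarith

theorem FeasiblePath.le_pathLen (hf : FeasiblePath G s g p) {φ : V → ℤ}
    (hφ : IsOneLipschitz G φ) (hg : φ g = 0) : φ s ≤ pathLen p := by
  have := monotone_movesBefore_add hφ hf.step (Nat.zero_le (arrivalTime g p))
  simp only [movesBefore, hf.1, hf.apply_of_arrivalTime_le le_rfl, hg] at this
  rw [hf.pathLen_eq_movesBefore le_rfl]
  simpa using this

/-- `movesBefore p - α ∘ p` and `movesBefore p + β ∘ p` are monotone, and at most `T - t` moves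
happen between times `t` and `T`. -/
theorem FeasiblePath.potential_window (hf : FeasiblePath G s g p) {T t : ℕ}
    (hT : arrivalTime g p ≤ T) (ht : t ≤ T) {α β : V → ℤ} (hα : IsOneLipschitz G α)
    (hβ : IsOneLipschitz G β) (hαs : α s = 0) (hβg : β g = 0) :
    α (p t) ≤ t ∧ β (p t) + t ≤ T ∧ α (p t) + β (p t) ≤ pathLen p := by
  have hα' := monotone_movesBefore_add hα.neg hf.step (Nat.zero_le t)
  have hβ' := monotone_movesBefore_add hβ hf.step ht
  have hmoves₀ : movesBefore p t ≤ t := by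
    simpa [movesBefore] using movesBefore_le_add (p := p) (Nat.zero_le t)
  have hmoves := movesBefore_le_add (p := p) ht
  simp only [movesBefore, Pi.neg_apply, hf.1, hαs, hf.apply_of_arrivalTime_le hT, hβg] at hα' hβ'
  rw [hf.pathLen_eq_movesBefore hT]
  omega

theorem pathLen_listPath {l : List V} (hf : FeasiblePath G s g (listPath l g)) (hg : g ∉ l) :
    pathLen (listPath l g) = movesBefore (listPath l g) l.length :=
  hf.pathLen_eq_movesBefore (arrivalTime_listPath hg).le

end Moves

section Costs

variable {R : Type} [Fintype R] {xI xG : R → V} {P : R → ℕ → V}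

theorem minTotalDist_le (hP : IsSolution G xI xG P) : minTotalDist G xI xG ≤ totalDist P :=
  Nat.sInf_le ⟨P, hP, rfl⟩

theorem minMakespan_le (hP : IsSolution G xI xG P) : minMakespan G xI xG ≤ makespan xG P :=
  Nat.sInf_le ⟨P, hP, rfl⟩

theorem arrivalTime_le_makespan (i : R) : arrivalTime (xG i) (P i) ≤ makespan xG P :=
  Finset.le_sup (f := fun j => arrivalTime (xG j) (P j)) (Finset.mem_univ i)

theorem makespan_le {n : ℕ} (h : ∀ i, arrivalTime (xG i) (P i) ≤ n) : makespan xG P ≤ n :=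
  Finset.sup_le fun i _ => h i

end Costs

end General

def chordGraph : SimpleGraph (Fin 9) := pathGraph 9 ⊔ edge 1 7

instance : DecidableRel chordGraph.Adj := fun u v =>
  decidable_of_iff
    ((u.val + 1 = v.val ∨ v.val + 1 = u.val) ∨ ((u = 1 ∧ v = 7 ∨ u = 7 ∧ v = 1) ∧ u ≠ v))
    (by rw [chordGraph, sup_adj, pathGraph_adj, edge_adj])

theorem chordGraph_connected : chordGraph.Connected :=
  (pathGraph_connected 8).mono le_sup_left

def starts : Fin 2 → Fin 9 := ![0, 6]

def goals : Fin 2 → Fin 9 := ![8, 2]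

theorem isMPPInstance_chordGraph : IsMPPInstance chordGraph starts goals :=
  ⟨chordGraph_connected, by decide, by decide⟩

def distFromStart : Fin 2 → Fin 9 → ℤ :=
  ![![0, 1, 2, 3, 4, 4, 3, 2, 3], ![3, 2, 3, 3, 2, 1, 0, 1, 2]]

def distToGoal : Fin 2 → Fin 9 → ℤ :=
  ![![3, 2, 3, 4, 4, 3, 2, 1, 0], ![2, 1, 0, 1, 2, 3, 3, 2, 3]]

theorem isOneLipschitz_distFromStart : ∀ i, IsOneLipschitz chordGraph (distFromStart i) := by
  unfold IsOneLipschitz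
  decide

theorem isOneLipschitz_distToGoal : ∀ i, IsOneLipschitz chordGraph (distToGoal i) := by
  unfold IsOneLipschitz
  decide

theorem distFromStart_starts : ∀ i, distFromStart i (starts i) = 0 := by decide

theorem distToGoal_goals : ∀ i, distToGoal i (goals i) = 0 := by decide

theorem distToGoal_starts : ∀ i, distToGoal i (starts i) = 3 := by decide

theorem three_le_pathLen {i : Fin 2} {r : ℕ → Fin 9}
    (hr : FeasiblePath chordGraph (starts i) (goals i) r) : 3 ≤ pathLen r := by
  have := hr.le_pathLen (isOneLipschitz_distToGoal i) (distToGoal_goals i)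
  rw [distToGoal_starts] at this
  exact_mod_cast this

abbrev InWindow (i : Fin 2) (t : ℕ) (v : Fin 9) : Prop :=
  distFromStart i v ≤ t ∧ distToGoal i v + t ≤ 4 ∧ distFromStart i v + distToGoal i v ≤ 3

theorem FeasiblePath.inWindow {i : Fin 2} {r : ℕ → Fin 9}
    (hr : FeasiblePath chordGraph (starts i) (goals i) r) (hl : pathLen r ≤ 3)
    (hT : arrivalTime (goals i) r ≤ 4) {t : ℕ} (ht : t ≤ 4) : InWindow i t (r t) := by
  obtain ⟨h₁, h₂, h₃⟩ := hr.potential_window hT ht (isOneLipschitz_distFromStart i)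
    (isOneLipschitz_distToGoal i) (distFromStart_starts i) (distToGoal_goals i)
  exact ⟨h₁, by exact_mod_cast h₂, h₃.trans (by exact_mod_cast hl)⟩

theorem eq_or_eq_of_inWindow :
    (∀ v, InWindow 0 1 v → v = 0 ∨ v = 1) ∧ (∀ v, InWindow 0 2 v → v = 1 ∨ v = 7) ∧
      (∀ v, InWindow 0 3 v → v = 7 ∨ v = 8) ∧ (∀ v, InWindow 1 1 v → v = 6 ∨ v = 7) ∧
      (∀ v, InWindow 1 2 v → v = 1 ∨ v = 7) ∧ (∀ v, InWindow 1 3 v → v = 1 ∨ v = 2) := by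
  decide

theorem collide_of_pathLen_le_of_arrivalTime_le {p q : ℕ → Fin 9}
    (hp : FeasiblePath chordGraph (starts 0) (goals 0) p)
    (hq : FeasiblePath chordGraph (starts 1) (goals 1) q) (hpl : pathLen p ≤ 3)
    (hql : pathLen q ≤ 3) (hpT : arrivalTime (goals 0) p ≤ 4)
    (hqT : arrivalTime (goals 1) q ≤ 4) : Collide p q := by
  obtain ⟨wp1, wp2, wp3, wq1, wq2, wq3⟩ := eq_or_eq_of_inWindow
  have inp {t : ℕ} (ht : t ≤ 4) := hp.inWindow hpl hpT ht
  have inq {t : ℕ} (ht : t ≤ 4) := hq.inWindow hql hqT ht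
  have stuck : ¬(chordGraph.Adj 1 8 ∨ (1 : Fin 9) = 8) ∧ ¬(chordGraph.Adj 0 7 ∨ (0 : Fin 9) = 7) ∧
      ¬(chordGraph.Adj 7 2 ∨ (7 : Fin 9) = 2) ∧ ¬(chordGraph.Adj 6 1 ∨ (6 : Fin 9) = 1) := by
    decide
  rcases wp2 _ (inp (by norm_num)) with hp2 | hp2 <;>
    rcases wq2 _ (inq (by norm_num)) with hq2 | hq2
  · exact Or.inl ⟨2, hp2.trans hq2.symm⟩
  · -- both robots are at the ends of the chord `1 — 7` at time `2` and cross it next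
    have hp3 : p 3 = 7 := (wp3 _ (inp (by norm_num))).resolve_right fun h =>
      stuck.1 (by simpa [hp2, h] using hp.step 2)
    have hq3 : q 3 = 1 := (wq3 _ (inq (by norm_num))).resolve_right fun h =>
      stuck.2.2.1 (by simpa [hq2, h] using hq.step 2)
    exact Or.inr ⟨2, hp2.trans hq3.symm, hp3.trans hq2.symm, by simp [hp2, hp3]⟩
  · -- both robots crossed the chord `1 — 7` between times `1` and `2`
    have hp1 : p 1 = 1 := (wp1 _ (inp (by norm_num))).resolve_left fun h =>
      stuck.2.1 (by simpa [hp2, h] using hp.step 1)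
    have hq1 : q 1 = 7 := (wq1 _ (inq (by norm_num))).resolve_left fun h =>
      stuck.2.2.2 (by simpa [hq2, h] using hq.step 1)
    exact Or.inr ⟨1, hp1.trans hq2.symm, hp2.trans hq1.symm, by simp [hp1, hp2]⟩
  · exact Or.inl ⟨2, hp2.trans hq2.symm⟩

def shortPath : ℕ → Fin 9 := listPath [0, 1, 7] 8

def waitingPath : ℕ → Fin 9 := listPath [6, 6, 6, 7, 1] 2

def detourPath : ℕ → Fin 9 := listPath [6, 5, 4, 3] 2

def waitingSolution : Fin 2 → ℕ → Fin 9 := ![shortPath, waitingPath]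

def detourSolution : Fin 2 → ℕ → Fin 9 := ![shortPath, detourPath]

theorem feasiblePath_shortPath : FeasiblePath chordGraph 0 8 shortPath :=
  feasiblePath_listPath (by decide) (by decide) (by decide)

theorem feasiblePath_waitingPath : FeasiblePath chordGraph 6 2 waitingPath :=
  feasiblePath_listPath (by decide) (by decide) (by decide)

theorem feasiblePath_detourPath : FeasiblePath chordGraph 6 2 detourPath :=
  feasiblePath_listPath (by decide) (by decide) (by decide)

theorem isSolution_waitingSolution : IsSolution chordGraph starts goals waitingSolution := by
  refine ⟨fun i => ?_, pairwise_not_collide_fin_two <| not_collide_of_forall_ge (T := 5)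
    (fun t => listPath_eq_of_length_le (by simp)) (fun t => listPath_eq_of_length_le (by simp))
    (by decide) (by decide)⟩
  fin_cases i
  exacts [feasiblePath_shortPath, feasiblePath_waitingPath]

theorem isSolution_detourSolution : IsSolution chordGraph starts goals detourSolution := by
  refine ⟨fun i => ?_, pairwise_not_collide_fin_two <| not_collide_of_forall_ge (T := 4)
    (fun t => listPath_eq_of_length_le (by simp)) (fun t => listPath_eq_of_length_le (by simp))
    (by decide) (by decide)⟩
  fin_cases i
  exacts [feasiblePath_shortPath, feasiblePath_detourPath]

theorem totalDist_waitingSolution : totalDist waitingSolution = 6 := by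
  rw [totalDist, Fin.sum_univ_two]
  change pathLen shortPath + pathLen waitingPath = 6
  unfold shortPath waitingPath
  rw [pathLen_listPath feasiblePath_shortPath (by decide),
    pathLen_listPath feasiblePath_waitingPath (by decide)]
  decide

theorem makespan_detourSolution_le : makespan goals detourSolution ≤ 4 := by
  refine makespan_le fun i => ?_
  fin_cases i
  · exact (arrivalTime_listPath (by decide)).trans_le (by decide)
  · exact (arrivalTime_listPath (by decide)).le

/-- There exists a solvable MPP instance such that no solution simultaneously
attains the minimum total distance and the minimum makespan. -/
theorem pareto_totalDist_makespan :
    ∃ (k : ℕ) (V : Type) (G : SimpleGraph V) (xI xG : Fin k → V),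
      IsMPPInstance G xI xG ∧ (∃ p, IsSolution G xI xG p) ∧
      ¬ ∃ p, IsSolution G xI xG p ∧ totalDist p = minTotalDist G xI xG ∧
        makespan xG p = minMakespan G xI xG := by
  refine ⟨2, Fin 9, chordGraph, starts, goals, isMPPInstance_chordGraph,
    ⟨_, isSolution_waitingSolution⟩, ?_⟩
  rintro ⟨p, hp, hdist, hspan⟩
  have hdist6 : pathLen (p 0) + pathLen (p 1) ≤ 6 := by
    have := hdist.trans_le (minTotalDist_le isSolution_waitingSolution)
    rwa [totalDist_waitingSolution, totalDist, Fin.sum_univ_two] at this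
  have hspan4 (i : Fin 2) : arrivalTime (goals i) (p i) ≤ 4 :=
    (arrivalTime_le_makespan i).trans <| hspan.trans_le <|
      (minMakespan_le isSolution_detourSolution).trans makespan_detourSolution_le
  have h3₀ := three_le_pathLen (hp.1 0)
  have h3₁ := three_le_pathLen (hp.1 1)
  exact hp.2 (by decide : (0 : Fin 2) ≠ 1) <| collide_of_pathLen_le_of_arrivalTime_le (hp.1 0)
    (hp.1 1) (by omega) (by omega) (hspan4 0) (hspan4 1)

end MPPFormal
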